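/- arXiv:2407.03072 — 2 statements merged into one kernel-verified Lean document; each statement's English description precedes it below -/
import Mathlib

section
/- With the notation above, the vector q_k = -ĝ_k + ((ĝ_k^T H q_{k-1})/(q_{k-1}^T H q_{k-1})) q_{k-1} is conjugate with respect to H to each of q_0, ..., q_{k-1} and is a nonzero multiple of q̂_k = x̂_{k+1} - x̂_k. -/
open Matrix

def krylov {n : ℕ} (b : Fin n → ℝ) (A : Matrix (Fin n) (Fin n) ℝ) (k : ℕ) :
    Submodule ℝ (Fin n → ℝ) :=
  Submodule.span ℝ (Set.range fun i : Fin k => (A ^ (i : ℕ)).mulVec b)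

/-!
The Krylov minimizer `x̂ⱼ` has gradient `gⱼ = H x̂ⱼ + c` orthogonal to `Kⱼ`, while `gⱼ ∈ Kⱼ₊₁`.
Hence the step `dⱼ = x̂ⱼ₊₁ - x̂ⱼ ∈ Kⱼ₊₁` is `H`-orthogonal to `Kⱼ` (as `H dⱼ = gⱼ₊₁ - gⱼ`), and it is
nonzero as long as `gⱼ ≠ 0`. So `q_{k-1} ∉ K_{k-1}`, which gives `K_k = K_{k-1} + ℝ q_{k-1}`; the
vector `q_k` is `H`-orthogonal to `K_{k-1}` (because `H K_{k-1} ⊆ K_k ⊥ g_k`) and to `q_{k-1}` (by the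
choice of the coefficient), hence to all of `K_k`. Finally `q_k` and `d_k` both lie in `K_{k+1}`,
which exceeds `K_k` by at most one dimension, and are `H`-orthogonal to `K_k`, so they are parallel.
-/

open Submodule

lemma Submodule.le_sup_span_singleton_of_notMem {K V : Type*} [Field K] [AddCommGroup V]
    [Module K V] {U W : Submodule K V} {w u : V} (hW : W ≤ U ⊔ K ∙ w) (hu : u ∈ W)
    (huU : u ∉ U) : W ≤ U ⊔ K ∙ u := by
  have hw : w ∈ span K (insert u (U : Set V)) := by
    refine mem_span_insert_exchange ?_ (by rwa [span_eq])
    rw [span_insert, span_eq, sup_comm]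
    exact hW hu
  rw [span_insert, span_eq, sup_comm] at hw
  exact hW.trans (sup_le le_sup_left ((span_singleton_le_iff_mem _ _).2 hw))

lemma eq_zero_of_forall_mul_add_mul_sq_nonneg {a b : ℝ} (h : ∀ t : ℝ, 0 ≤ a * t + b * t ^ 2) :
    a = 0 := by
  -- at `t = -a / (|b| + 1)` the expression is at most `-a ^ 2 / (|b| + 1) ^ 2`
  have hs : 0 < |b| + 1 := by positivity
  have ht := h (-a / (|b| + 1))
  rw [div_pow, neg_sq, ← mul_le_mul_iff_of_pos_right (pow_pos hs 2), zero_mul] at ht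
  field_simp at ht
  nlinarith [le_abs_self b, sq_nonneg a]

section Conjugacy

variable {ι : Type*} [Fintype ι] {H : Matrix ι ι ℝ}

lemma Matrix.IsSymm.dotProduct_mulVec_comm (hH : H.IsSymm) (u v : ι → ℝ) :
    u ⬝ᵥ H *ᵥ v = v ⬝ᵥ H *ᵥ u := by
  conv_lhs => rw [dotProduct_mulVec, ← hH, vecMul_transpose, dotProduct_comm]

lemma Matrix.PosDef.eq_zero_of_dotProduct_mulVec_self_eq_zero (hH : H.PosDef) {v : ι → ℝ}
    (hv : v ⬝ᵥ H *ᵥ v = 0) : v = 0 := by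
  by_contra h
  simpa [hv] using hH.dotProduct_mulVec_pos h

lemma Matrix.IsSymm.quadratic_add (hH : H.IsSymm) (c x v : ι → ℝ) :
    1 / 2 * ((x + v) ⬝ᵥ H *ᵥ (x + v)) + c ⬝ᵥ (x + v) =
      1 / 2 * (x ⬝ᵥ H *ᵥ x) + c ⬝ᵥ x + (H *ᵥ x + c) ⬝ᵥ v + 1 / 2 * (v ⬝ᵥ H *ᵥ v) := by
  have hxv := hH.dotProduct_mulVec_comm x v
  simp only [mulVec_add, dotProduct_add, add_dotProduct, dotProduct_comm (H *ᵥ x) v] at *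
  linarith

lemma Matrix.IsSymm.dotProduct_eq_zero_of_minimizer (hH : H.IsSymm) {c : ι → ℝ}
    {f : (ι → ℝ) → ℝ} (hf : ∀ x, f x = 1 / 2 * (x ⬝ᵥ H *ᵥ x) + c ⬝ᵥ x)
    {S : Submodule ℝ (ι → ℝ)} {x x0 : ι → ℝ} (hx : x - x0 ∈ S)
    (hmin : ∀ y, y - x0 ∈ S → f x ≤ f y) {v : ι → ℝ} (hv : v ∈ S) :
    (H *ᵥ x + c) ⬝ᵥ v = 0 := by
  refine eq_zero_of_forall_mul_add_mul_sq_nonneg (b := 1 / 2 * (v ⬝ᵥ H *ᵥ v)) fun t => ?_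
  have hle := hmin (x + t • v) (by rw [add_sub_right_comm]; exact S.add_mem hx (S.smul_mem t hv))
  rw [hf, hf, hH.quadratic_add] at hle
  simp only [mulVec_smul, dotProduct_smul, smul_dotProduct, smul_eq_mul] at hle
  linarith

lemma Matrix.PosDef.mem_span_singleton_of_orthogonal (hH : H.PosDef)
    {U : Submodule ℝ (ι → ℝ)} {w u u' : ι → ℝ} (hu : u ∈ U ⊔ ℝ ∙ w) (hu' : u' ∈ U ⊔ ℝ ∙ w)
    (hu0 : u ≠ 0) (horth : ∀ v ∈ U, u ⬝ᵥ H *ᵥ v = 0) (horth' : ∀ v ∈ U, u' ⬝ᵥ H *ᵥ v = 0) :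
    u' ∈ ℝ ∙ u := by
  have huU : u ∉ U := fun h => hu0 (hH.eq_zero_of_dotProduct_mulVec_self_eq_zero (horth u h))
  obtain ⟨y, hy, z, hz, rfl⟩ := mem_sup.1 (le_sup_span_singleton_of_notMem le_rfl hu huU hu')
  suffices y = 0 by simpa [this] using hz
  refine hH.eq_zero_of_dotProduct_mulVec_self_eq_zero ?_
  obtain ⟨a, rfl⟩ := mem_span_singleton.1 hz
  have h := horth' y hy
  rwa [add_dotProduct, smul_dotProduct, horth y hy, smul_zero, add_zero] at h

noncomputable def cgDirection (H : Matrix ι ι ℝ) (g p : ι → ℝ) : ι → ℝ :=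
  -g + ((g ⬝ᵥ H *ᵥ p) / (p ⬝ᵥ H *ᵥ p)) • p

lemma cgDirection_dotProduct_mulVec_eq_zero_of_mem_sup {U : Submodule ℝ (ι → ℝ)} {g p : ι → ℝ}
    (hp : p ⬝ᵥ H *ᵥ p ≠ 0) (hg : ∀ y ∈ U, g ⬝ᵥ H *ᵥ y = 0) (hpU : ∀ y ∈ U, p ⬝ᵥ H *ᵥ y = 0)
    {v : ι → ℝ} (hv : v ∈ U ⊔ ℝ ∙ p) : cgDirection H g p ⬝ᵥ H *ᵥ v = 0 := by
  obtain ⟨y, hy, z, hz, rfl⟩ := mem_sup.1 hv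
  obtain ⟨a, rfl⟩ := mem_span_singleton.1 hz
  simp only [cgDirection, mulVec_add, mulVec_smul, dotProduct_add, add_dotProduct,
    neg_dotProduct, smul_dotProduct, dotProduct_smul, hg y hy, hpU y hy, smul_eq_mul]
  field_simp
  ring

lemma cgDirection_ne_zero {g p : ι → ℝ} (hg : g ≠ 0) (hgp : g ⬝ᵥ p = 0) :
    cgDirection H g p ≠ 0 := by
  intro h
  have hgg := congrArg (g ⬝ᵥ ·) h
  simp only [cgDirection, dotProduct_add, dotProduct_neg, dotProduct_smul, hgp, smul_zero,
    add_zero, dotProduct_zero, neg_eq_zero, dotProduct_self_eq_zero] at hgg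
  exact hg hgg

end Conjugacy

section Krylov

variable {n : ℕ} {b : Fin n → ℝ} {A : Matrix (Fin n) (Fin n) ℝ}

lemma krylov_mono : Monotone (krylov b A) := fun _ _ h =>
  span_mono (Set.range_subset_iff.2 fun i => ⟨⟨i, i.2.trans_le h⟩, rfl⟩)

lemma pow_mulVec_mem_krylov {i j : ℕ} (hij : i < j) : (A ^ i) *ᵥ b ∈ krylov b A j :=
  subset_span ⟨⟨i, hij⟩, rfl⟩

lemma self_mem_krylov {j : ℕ} (hj : 0 < j) : b ∈ krylov b A j := by
  simpa using pow_mulVec_mem_krylov (A := A) (b := b) hj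

lemma mulVec_mem_krylov_succ {j : ℕ} {x : Fin n → ℝ} (hx : x ∈ krylov b A j) :
    A *ᵥ x ∈ krylov b A (j + 1) := by
  refine span_induction ?_ (by simp) (fun _ _ _ _ hx hy => ?_) (fun t _ _ hx => ?_) hx
  · rintro _ ⟨i, rfl⟩
    rw [mulVec_mulVec, ← pow_succ']
    exact pow_mulVec_mem_krylov (Nat.succ_lt_succ i.2)
  · rw [mulVec_add]; exact add_mem hx hy
  · rw [mulVec_smul]; exact smul_mem _ t hx

lemma krylov_succ_le_sup (j : ℕ) :
    krylov b A (j + 1) ≤ krylov b A j ⊔ ℝ ∙ ((A ^ j) *ᵥ b) := by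
  refine span_le.2 (Set.range_subset_iff.2 fun i => ?_)
  rcases (Nat.lt_succ_iff.1 i.2).lt_or_eq with hi | hi
  · exact mem_sup_left (pow_mulVec_mem_krylov hi)
  · rw [hi]
    exact mem_sup_right (mem_span_singleton_self _)

end Krylov

section KrylovMinimizers

variable {n : ℕ} {H : Matrix (Fin n) (Fin n) ℝ} {c x0 g0 : Fin n → ℝ} {xhat : ℕ → Fin n → ℝ}

lemma grad_mem_krylov_succ (hg0 : g0 = H *ᵥ x0 + c)
    (hmem : ∀ j, xhat j - x0 ∈ krylov g0 H j) (j : ℕ) :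
    H *ᵥ xhat j + c ∈ krylov g0 H (j + 1) := by
  have hg : H *ᵥ xhat j + c = g0 + H *ᵥ (xhat j - x0) := by
    rw [hg0, mulVec_sub]; abel
  rw [hg]
  exact add_mem (self_mem_krylov j.succ_pos) (mulVec_mem_krylov_succ (hmem j))

lemma step_mem_krylov_succ (hmem : ∀ j, xhat j - x0 ∈ krylov g0 H j) (j : ℕ) :
    xhat (j + 1) - xhat j ∈ krylov g0 H (j + 1) := by
  rw [← sub_sub_sub_cancel_right _ _ x0]
  exact sub_mem (hmem (j + 1)) (krylov_mono j.le_succ (hmem j))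

lemma step_dotProduct_mulVec_eq_zero (hH : H.IsSymm)
    (horth : ∀ j, ∀ v ∈ krylov g0 H j, (H *ᵥ xhat j + c) ⬝ᵥ v = 0)
    {j : ℕ} {v : Fin n → ℝ} (hv : v ∈ krylov g0 H j) :
    (xhat (j + 1) - xhat j) ⬝ᵥ H *ᵥ v = 0 := by
  have hstep : H *ᵥ (xhat (j + 1) - xhat j) = (H *ᵥ xhat (j + 1) + c) - (H *ᵥ xhat j + c) := by
    rw [mulVec_sub]; abel
  rw [hH.dotProduct_mulVec_comm, hstep, dotProduct_comm, sub_dotProduct,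
    horth _ _ (krylov_mono j.le_succ hv), horth _ _ hv, sub_zero]

lemma grad_eq_zero_of_le (hH : H.PosDef) (hmem : ∀ j, xhat j - x0 ∈ krylov g0 H j)
    (horth : ∀ j, ∀ v ∈ krylov g0 H j, (H *ᵥ xhat j + c) ⬝ᵥ v = 0)
    {i j : ℕ} (hij : i ≤ j) (hi : H *ᵥ xhat i + c = 0) : H *ᵥ xhat j + c = 0 := by
  have he : xhat j - xhat i ∈ krylov g0 H j := by
    rw [← sub_sub_sub_cancel_right _ _ x0]
    exact sub_mem (hmem j) (krylov_mono hij (hmem i))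
  have hHe : H *ᵥ (xhat j - xhat i) = H *ᵥ xhat j + c := by
    rw [mulVec_sub, ← add_sub_add_right_eq_sub _ _ c, hi, sub_zero]
  have he0 : xhat j - xhat i = 0 := hH.eq_zero_of_dotProduct_mulVec_self_eq_zero <| by
    rw [hHe, dotProduct_comm, horth j _ he]
  rwa [sub_eq_zero.1 he0]

lemma step_ne_zero (hg0 : g0 = H *ᵥ x0 + c) (hmem : ∀ j, xhat j - x0 ∈ krylov g0 H j)
    (horth : ∀ j, ∀ v ∈ krylov g0 H j, (H *ᵥ xhat j + c) ⬝ᵥ v = 0)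
    {j : ℕ} (hj : H *ᵥ xhat j + c ≠ 0) : xhat (j + 1) - xhat j ≠ 0 := by
  intro hstep
  have h := horth (j + 1) _ (grad_mem_krylov_succ hg0 hmem j)
  rw [sub_eq_zero.1 hstep, dotProduct_self_eq_zero] at h
  exact hj h

lemma cgDirection_dotProduct_mulVec_eq_zero_of_mem_krylov (hH : H.PosDef)
    (hg0 : g0 = H *ᵥ x0 + c) (hmem : ∀ j, xhat j - x0 ∈ krylov g0 H j)
    (horth : ∀ j, ∀ v ∈ krylov g0 H j, (H *ᵥ xhat j + c) ⬝ᵥ v = 0)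
    {m : ℕ} {l : ℝ} (hl : l ≠ 0) (hg : H *ᵥ xhat (m + 1) + c ≠ 0)
    {v : Fin n → ℝ} (hv : v ∈ krylov g0 H (m + 1)) :
    cgDirection H (H *ᵥ xhat (m + 1) + c) (l • (xhat (m + 1) - xhat m)) ⬝ᵥ H *ᵥ v = 0 := by
  have hsymm : H.IsSymm := isHermitian_iff_isSymm.1 hH.isHermitian
  set p := l • (xhat (m + 1) - xhat m)
  have hp0 : p ≠ 0 := smul_ne_zero hl (step_ne_zero hg0 hmem horth
    fun h => hg (grad_eq_zero_of_le hH hmem horth m.le_succ h))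
  have hpU : ∀ y ∈ krylov g0 H m, p ⬝ᵥ H *ᵥ y = 0 := fun y hy => by
    rw [smul_dotProduct, step_dotProduct_mulVec_eq_zero hsymm horth hy, smul_zero]
  have hsplit : krylov g0 H (m + 1) ≤ krylov g0 H m ⊔ ℝ ∙ p :=
    le_sup_span_singleton_of_notMem (krylov_succ_le_sup m)
      (smul_mem _ l (step_mem_krylov_succ hmem m))
      fun h => hp0 (hH.eq_zero_of_dotProduct_mulVec_self_eq_zero (hpU _ h))
  exact cgDirection_dotProduct_mulVec_eq_zero_of_mem_sup
    (fun h => hp0 (hH.eq_zero_of_dotProduct_mulVec_self_eq_zero h))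
    (fun y hy => horth _ _ (mulVec_mem_krylov_succ hy)) hpU (hsplit hv)

end KrylovMinimizers

theorem next_conjugate_direction {n : ℕ}
    (H : Matrix (Fin n) (Fin n) ℝ) (hH : H.PosDef)
    (c x0 : Fin n → ℝ) (g0 : Fin n → ℝ) (hg0 : g0 = H.mulVec x0 + c)
    (f : (Fin n → ℝ) → ℝ)
    (hf : ∀ x, f x = (1 / 2) * (x ⬝ᵥ H.mulVec x) + c ⬝ᵥ x)
    (xhat : ℕ → (Fin n → ℝ))
    (hmem : ∀ j : ℕ, xhat j - x0 ∈ krylov g0 H j)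
    (hmin : ∀ j : ℕ, ∀ y : Fin n → ℝ, y - x0 ∈ krylov g0 H j → f (xhat j) ≤ f y)
    (k : ℕ) (hk : 1 ≤ k)
    (ghat : Fin n → ℝ) (hghat : ghat = H.mulVec (xhat k) + c) (hgne : ghat ≠ 0)
    (q : Fin k → (Fin n → ℝ)) (lam : Fin k → ℝ) (hlam : ∀ i, lam i ≠ 0)
    (hq : ∀ i : Fin k, q i = lam i • (xhat ((i : ℕ) + 1) - xhat (i : ℕ)))
    (qlast : Fin n → ℝ)
    (hqlast : qlast = q ⟨k - 1, by omega⟩)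
    (qk : Fin n → ℝ)
    (hqk : qk = -ghat + ((ghat ⬝ᵥ H.mulVec qlast) / (qlast ⬝ᵥ H.mulVec qlast)) • qlast) :
    (∀ i : Fin k, qk ⬝ᵥ H.mulVec (q i) = 0) ∧
      ∃ μ : ℝ, μ ≠ 0 ∧ qk = μ • (xhat (k + 1) - xhat k) := by
  have hsymm : H.IsSymm := isHermitian_iff_isSymm.1 hH.isHermitian
  have horth : ∀ j, ∀ v ∈ krylov g0 H j, (H *ᵥ xhat j + c) ⬝ᵥ v = 0 := fun j _ hv =>
    hsymm.dotProduct_eq_zero_of_minimizer hf (hmem j) (hmin j) hv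
  obtain ⟨m, rfl⟩ : ∃ m, k = m + 1 := ⟨k - 1, by omega⟩
  obtain ⟨l, hl, hp⟩ : ∃ l ≠ 0, qlast = l • (xhat (m + 1) - xhat m) :=
    ⟨_, hlam _, by simpa using hqlast.trans (hq _)⟩
  replace hqk : qk = cgDirection H ghat qlast := hqk
  subst hghat hqk hp
  have hconj := fun v (hv : v ∈ krylov g0 H (m + 1)) =>
    cgDirection_dotProduct_mulVec_eq_zero_of_mem_krylov hH hg0 hmem horth hl hgne hv
  refine ⟨fun i => hconj _ ?_, ?_⟩
  · rw [hq i]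
    exact smul_mem _ _ (krylov_mono i.2 (step_mem_krylov_succ hmem i))
  have hpK := smul_mem _ l (step_mem_krylov_succ hmem m)
  have hdirK : cgDirection H (H *ᵥ xhat (m + 1) + c) (l • (xhat (m + 1) - xhat m)) ∈
      krylov g0 H (m + 2) :=
    add_mem (neg_mem (grad_mem_krylov_succ hg0 hmem _))
      (smul_mem _ _ (krylov_mono (m + 1).le_succ hpK))
  obtain ⟨μ, hμ⟩ := mem_span_singleton.1 (hH.mem_span_singleton_of_orthogonal
    (krylov_succ_le_sup _ (step_mem_krylov_succ hmem (m + 1))) (krylov_succ_le_sup _ hdirK)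
    (step_ne_zero hg0 hmem horth hgne) (fun v hv => step_dotProduct_mulVec_eq_zero hsymm horth hv)
    hconj)
  have hdir0 := cgDirection_ne_zero (H := H) hgne (horth _ _ hpK)
  exact ⟨μ, fun hμ0 => hdir0 (by rw [← hμ, hμ0, zero_smul]), hμ.symm⟩
end

section
/- Conjugate gradient finite termination: let H be symmetric positive definite and define iterates by x_{k+1} = x_k + α_k p_k with p_0 = -g_0, p_k = -g_k + ((g_k^T H p_{k-1})/(p_{k-1}^T H p_{k-1})) p_{k-1}, g_k = H x_k + c, and exact line search α_k = -(g_k^T p_k)/(p_k^T H p_k) (stopping when g_k = 0). Then there exists m ≤ n such that g_m = 0, i.e. x_m = -H^{-1}c. -/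
/-!
As long as no gradient vanishes, one shows by a simultaneous induction on `k` that the new
gradient `g k` is orthogonal to all earlier gradients and search directions, that `p k` is
`H`-conjugate to all earlier directions, and that `g k ⬝ᵥ p k = -‖g k‖²` (so `p k ≠ 0` and the step
size is nonzero). Exact line search gives orthogonality to the latest direction, the choice of
`β` gives conjugacy with it, and the older relations follow from the induction hypothesis since
`H p i` is a multiple of `g (i + 1) - g i`. Hence `g 0, …, g n` would be `n + 1` nonzero pairwise
orthogonal vectors in `ℝⁿ`.
-/

open Matrix

theorem Matrix.IsSymm.dotProduct_mulVec_comm_s19 {m R : Type*} [Fintype m] [CommSemiring R]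
    {A : Matrix m m R} (hA : A.IsSymm) (u v : m → R) : u ⬝ᵥ A *ᵥ v = v ⬝ᵥ A *ᵥ u := by
  rw [dotProduct_mulVec, ← mulVec_transpose, hA.eq, dotProduct_comm]

theorem exists_eq_zero_of_pairwise_dotProduct_eq_zero {ι m : Type*} [Fintype ι] [Fintype m]
    (v : ι → m → ℝ) (hcard : Fintype.card m < Fintype.card ι)
    (horth : Pairwise fun i j => v i ⬝ᵥ v j = 0) : ∃ i, v i = 0 := by
  by_contra! hne
  have hli : LinearIndependent ℝ fun i => WithLp.toLp 2 (v i) :=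
    linearIndependent_of_ne_zero_of_inner_eq_zero (by simpa using hne)
      fun i j hij => by simpa [EuclideanSpace.inner_toLp_toLp, dotProduct_comm] using horth hij
  have := hli.fintype_card_le_finrank
  rw [finrank_euclideanSpace] at this
  omega

namespace ConjugateGradient

-- exact line search
theorem add_smul_mulVec_dotProduct_eq_zero {m : Type*} [Fintype m] (H : Matrix m m ℝ)
    (g p : m → ℝ) (hp : p ⬝ᵥ H *ᵥ p ≠ 0) :
    (g + (-(g ⬝ᵥ p) / (p ⬝ᵥ H *ᵥ p)) • H *ᵥ p) ⬝ᵥ p = 0 := by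
  rw [add_dotProduct, smul_dotProduct, dotProduct_comm (H *ᵥ p), smul_eq_mul,
    div_mul_cancel₀ _ hp]
  ring

-- the choice of `β` in the direction update
theorem dotProduct_mulVec_neg_add_smul_eq_zero {m : Type*} [Fintype m] {H : Matrix m m ℝ}
    (hH : H.IsSymm) (g p : m → ℝ) (hp : p ⬝ᵥ H *ᵥ p ≠ 0) :
    p ⬝ᵥ H *ᵥ (-g + ((g ⬝ᵥ H *ᵥ p) / (p ⬝ᵥ H *ᵥ p)) • p) = 0 := by
  rw [mulVec_add, mulVec_neg, mulVec_smul, dotProduct_add, dotProduct_neg, dotProduct_smul,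
    hH.dotProduct_mulVec_comm_s19 p g, smul_eq_mul, div_mul_cancel₀ _ hp]
  ring

variable {m : Type*} [Fintype m] {H : Matrix m m ℝ} {g p : ℕ → m → ℝ} {α : ℕ → ℝ} {N k : ℕ}

/-- The first `N` steps of conjugate gradients, with the iterates eliminated in favour of the
gradients `g k = H x k + c`, for which `x (k + 1) = x k + α k • p k` reads as below. -/
structure IsRun (H : Matrix m m ℝ) (g p : ℕ → m → ℝ) (α : ℕ → ℝ) (N : ℕ) : Prop where
  direction_zero : p 0 = -g 0
  stepSize_eq : ∀ k, α k = -(g k ⬝ᵥ p k) / (p k ⬝ᵥ H *ᵥ p k)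
  gradient_succ : ∀ k < N, g (k + 1) = g k + α k • H *ᵥ p k
  direction_succ : ∀ k < N,
    p (k + 1) = -g (k + 1) + ((g (k + 1) ⬝ᵥ H *ᵥ p k) / (p k ⬝ᵥ H *ᵥ p k)) • p k

def Relations (H : Matrix m m ℝ) (g p : ℕ → m → ℝ) (k : ℕ) : Prop :=
  g k ⬝ᵥ p k = -(g k ⬝ᵥ g k) ∧
    ∀ i < k, g k ⬝ᵥ g i = 0 ∧ g k ⬝ᵥ p i = 0 ∧ p i ⬝ᵥ H *ᵥ p k = 0

theorem Relations.direction_ne_zero (h : Relations H g p k) (hg : g k ≠ 0) : p k ≠ 0 := by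
  intro hp
  have := h.1
  rw [hp, dotProduct_zero, zero_eq_neg, dotProduct_self_eq_zero] at this
  exact hg this

theorem Relations.direction_dotProduct_mulVec_pos (hH : H.PosDef) (h : Relations H g p k)
    (hg : g k ≠ 0) :
    0 < p k ⬝ᵥ H *ᵥ p k := by
  simpa using hH.dotProduct_mulVec_pos (h.direction_ne_zero hg)

theorem IsRun.stepSize_ne_zero (hH : H.PosDef) (hrun : IsRun H g p α N)
    (h : Relations H g p k) (hg : g k ≠ 0) : α k ≠ 0 := by
  rw [hrun.stepSize_eq, h.1, neg_neg]
  exact div_ne_zero (mt dotProduct_self_eq_zero.mp hg) (h.direction_dotProduct_mulVec_pos hH hg).ne'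

theorem IsRun.mulVec_direction (hrun : IsRun H g p α N) (hk : k < N) (hα : α k ≠ 0) :
    H *ᵥ p k = (α k)⁻¹ • (g (k + 1) - g k) := by
  rw [hrun.gradient_succ k hk, add_sub_cancel_left, smul_smul, inv_mul_cancel₀ hα, one_smul]

/-- Every gradient is a combination of the search directions up to it. -/
theorem IsRun.dotProduct_gradient_eq_zero (hrun : IsRun H g p α N) {w : m → ℝ} {i : ℕ}
    (hi : i ≤ N) (hw : ∀ j ≤ i, w ⬝ᵥ p j = 0) : w ⬝ᵥ g i = 0 := by
  cases i with
  | zero => rw [← neg_neg (g 0), ← hrun.direction_zero, dotProduct_neg, hw 0 le_rfl, neg_zero]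
  | succ j =>
    have hg : g (j + 1) = ((g (j + 1) ⬝ᵥ H *ᵥ p j) / (p j ⬝ᵥ H *ᵥ p j)) • p j - p (j + 1) := by
      rw [hrun.direction_succ j hi]; abel
    rw [hg, dotProduct_sub, dotProduct_smul, hw j j.le_succ, hw (j + 1) le_rfl]
    simp

section Step

variable (hH : H.PosDef) (hrun : IsRun H g p α N) (hk : k < N)
  (hrel : ∀ j ≤ k, Relations H g p j) (hne : ∀ j ≤ k, g j ≠ 0)

include hH hrun hk hrel hne

theorem IsRun.gradient_succ_dotProduct_direction : ∀ i ≤ k, g (k + 1) ⬝ᵥ p i = 0 := by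
  intro i hi
  rcases hi.eq_or_lt with rfl | hik
  · rw [hrun.gradient_succ i hk, hrun.stepSize_eq]
    exact add_smul_mulVec_dotProduct_eq_zero H _ _
      ((hrel i le_rfl).direction_dotProduct_mulVec_pos hH (hne i le_rfl)).ne'
  · obtain ⟨-, hgp, hpHp⟩ := (hrel k le_rfl).2 i hik
    rw [hrun.gradient_succ k hk, add_dotProduct, smul_dotProduct, dotProduct_comm (H *ᵥ p k),
      hgp, hpHp, smul_zero, add_zero]

theorem IsRun.gradient_succ_dotProduct_gradient : ∀ i ≤ k, g (k + 1) ⬝ᵥ g i = 0 :=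
  fun i hi => hrun.dotProduct_gradient_eq_zero (by omega) fun j hj =>
    hrun.gradient_succ_dotProduct_direction hH hk hrel hne j (hj.trans hi)

theorem IsRun.direction_dotProduct_mulVec_direction_succ :
    ∀ i ≤ k, p i ⬝ᵥ H *ᵥ p (k + 1) = 0 := by
  have hsymm : H.IsSymm := isHermitian_iff_isSymm.mp hH.isHermitian
  intro i hi
  rw [hrun.direction_succ k hk]
  rcases hi.eq_or_lt with rfl | hik
  · exact dotProduct_mulVec_neg_add_smul_eq_zero hsymm _ _
      ((hrel i le_rfl).direction_dotProduct_mulVec_pos hH (hne i le_rfl)).ne'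
  · have hg : g (k + 1) ⬝ᵥ H *ᵥ p i = 0 := by
      rw [hrun.mulVec_direction (hik.trans hk)
          (hrun.stepSize_ne_zero hH (hrel i hik.le) (hne i hik.le)),
        dotProduct_smul, dotProduct_sub,
        hrun.gradient_succ_dotProduct_gradient hH hk hrel hne (i + 1) hik,
        hrun.gradient_succ_dotProduct_gradient hH hk hrel hne i hik.le, sub_zero, smul_zero]
    rw [mulVec_add, mulVec_neg, mulVec_smul, dotProduct_add, dotProduct_neg, dotProduct_smul,
      hsymm.dotProduct_mulVec_comm_s19 (p i), hg, ((hrel k le_rfl).2 i hik).2.2, smul_zero,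
      neg_zero, add_zero]

theorem IsRun.relations_succ : Relations H g p (k + 1) := by
  have hgp := hrun.gradient_succ_dotProduct_direction hH hk hrel hne
  refine ⟨?_, fun i hi => ⟨hrun.gradient_succ_dotProduct_gradient hH hk hrel hne i (by omega),
    hgp i (by omega),
    hrun.direction_dotProduct_mulVec_direction_succ hH hk hrel hne i (by omega)⟩⟩
  rw [hrun.direction_succ k hk, dotProduct_add, dotProduct_neg, dotProduct_smul, hgp k le_rfl,
    smul_zero, add_zero]

end Step

theorem IsRun.relations (hH : H.PosDef) (hrun : IsRun H g p α N) (hne : ∀ j < N, g j ≠ 0) :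
    ∀ k ≤ N, Relations H g p k := by
  intro k
  induction k using Nat.strong_induction_on with
  | _ k ih =>
    intro hk
    cases k with
    | zero =>
      exact ⟨by rw [hrun.direction_zero, dotProduct_neg], fun i hi => absurd hi i.not_lt_zero⟩
    | succ k =>
      exact hrun.relations_succ hH hk (fun j hj => ih j (by omega) (by omega))
        fun j hj => hne j (by omega)

theorem IsRun.gradient_dotProduct_gradient_eq_zero (hH : H.PosDef) (hrun : IsRun H g p α N)
    (hne : ∀ j < N, g j ≠ 0) {i j : ℕ} (hij : i ≠ j) (hi : i ≤ N) (hj : j ≤ N) :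
    g i ⬝ᵥ g j = 0 := by
  rcases hij.lt_or_gt with hij | hij
  · rw [dotProduct_comm]
    exact ((hrun.relations hH hne j hj).2 i hij).1
  · exact ((hrun.relations hH hne i hi).2 j hij).1

end ConjugateGradient

theorem cg_finite_termination {n : ℕ}
    (H : Matrix (Fin n) (Fin n) ℝ) (hH : H.PosDef)
    (c : Fin n → ℝ)
    (x g p : ℕ → (Fin n → ℝ))
    (α : ℕ → ℝ)
    (hg : ∀ k, g k = H.mulVec (x k) + c)
    (hp0 : p 0 = -(g 0))
    (hα : ∀ k, α k = -(g k ⬝ᵥ p k) / (p k ⬝ᵥ H.mulVec (p k)))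
    (hx : ∀ k, (∀ j, j ≤ k → g j ≠ 0) → x (k + 1) = x k + α k • p k)
    (hp : ∀ k, (∀ j, j ≤ k + 1 → g j ≠ 0) →
      p (k + 1) = -(g (k + 1)) +
        ((g (k + 1) ⬝ᵥ H.mulVec (p k)) / (p k ⬝ᵥ H.mulVec (p k))) • p k) :
    ∃ m : ℕ, m ≤ n ∧ g m = 0 := by
  by_contra! hne
  have hrun : ConjugateGradient.IsRun H g p α n :=
    { direction_zero := hp0
      stepSize_eq := hα
      gradient_succ := fun k hk => by
        rw [hg, hg, hx k fun j hj => hne j (by omega), mulVec_add, mulVec_smul, add_right_comm]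
      direction_succ := fun k hk => hp k fun j hj => hne j (by omega) }
  obtain ⟨i, hi⟩ := exists_eq_zero_of_pairwise_dotProduct_eq_zero (fun i : Fin (n + 1) => g i)
    (by simp) fun i j hij => hrun.gradient_dotProduct_gradient_eq_zero hH (fun j hj => hne j hj.le)
      (Fin.val_ne_of_ne hij) i.is_le j.is_le
  exact hne i i.is_le hi
end
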